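/- arXiv:2502.02245 — 2 statements merged into one kernel-verified Lean document; each statement's English description precedes it below -/
import Mathlib

section
/- Let f : ℝ^n → ℝ be multilinear and a < b. A vertex p ∈ {a,b}^n is a strict local minimum of f on [a,b]^n if and only if for every i, flipping the i-th coordinate (replacing p_i = a by b or p_i = b by a) strictly increases the value of f. -/
lemma multilinear_interp {n : ℕ} (f : (Fin n → ℝ) → ℝ)
    (hf : ∀ (i : Fin n) (x : Fin n → ℝ), ∃ c d : ℝ,
      ∀ t : ℝ, f (Function.update x i t) = c * t + d)
    (p q x : Fin n → ℝ) (s : Fin n → ℝ)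
    (hx : ∀ i, x i = (1 - s i) * p i + s i * q i) (T : Finset (Fin n)) :
    f x = ∑ S ∈ T.powerset,
      ((∏ i ∈ S, s i) * ∏ i ∈ T \ S, (1 - s i)) *
        f (fun j => if j ∈ S then q j else if j ∈ T then p j else x j) := by
  induction T using Finset.induction_on with
  | empty => simp
  | insert i T hi ih =>
    rw [Finset.sum_powerset_insert hi, ← Finset.sum_add_distrib, ih]
    refine Finset.sum_congr rfl fun S hS => ?_
    have hST : S ⊆ T := Finset.mem_powerset.mp hS
    have hiS : i ∉ S := fun h => hi (hST h)
    obtain ⟨c, d, hcd⟩ := hf i (fun j => if j ∈ S then q j else if j ∈ T then p j else x j)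
    have hpt : (fun j => if j ∈ S then q j else if j ∈ T then p j else x j)
        = Function.update (fun j => if j ∈ S then q j else if j ∈ T then p j else x j) i (x i) := by
      funext j
      rcases eq_or_ne j i with rfl | hj
      · simp [hiS, hi]
      · simp [Function.update, hj]
    have hpt1 : (fun j => if j ∈ S then q j else if j ∈ insert i T then p j else x j)
        = Function.update (fun j => if j ∈ S then q j else if j ∈ T then p j else x j) i (p i) := by
      funext j
      rcases eq_or_ne j i with rfl | hj
      · simp [hiS]
      · simp [Function.update, hj, Finset.mem_insert]
    have hpt2 : (fun j => if j ∈ insert i S then q j else if j ∈ insert i T then p j else x j)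
        = Function.update (fun j => if j ∈ S then q j else if j ∈ T then p j else x j) i (q i) := by
      funext j
      rcases eq_or_ne j i with rfl | hj
      · simp
      · simp [Function.update, hj, Finset.mem_insert]
    have hd1 : insert i T \ S = insert i (T \ S) := by
      rw [Finset.insert_sdiff_of_notMem _ hiS]
    have hd2 : insert i T \ insert i S = T \ S := by
      ext j
      simp only [Finset.mem_sdiff, Finset.mem_insert, not_or]
      constructor
      · rintro ⟨h1 | h1, h2, h3⟩
        · exact absurd h1 h2
        · exact ⟨h1, h3⟩
      · rintro ⟨h1, h2⟩
        exact ⟨Or.inr h1, fun h => hi (h ▸ h1), h2⟩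
    have hiTS : i ∉ T \ S := fun h => hi (Finset.mem_sdiff.mp h).1
    rw [hpt, hcd, hpt1, hcd, hpt2, hcd, hd1, hd2, Finset.prod_insert hiTS,
      Finset.prod_insert hiS, hx i]
    ring

/-- A vertex `p ∈ {a,b}^n` is a strict local minimum of a multilinear `f` on `[a,b]^n`
iff flipping any single coordinate strictly increases `f`. -/
theorem multilinear_strictLocalMin_iff_flips_increase (n : ℕ) (a b : ℝ) (hab : a < b)
    (f : (Fin n → ℝ) → ℝ)
    (hf : ∀ (i : Fin n) (x : Fin n → ℝ), ∃ c d : ℝ,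
      ∀ t : ℝ, f (Function.update x i t) = c * t + d)
    (p : Fin n → ℝ) (hp : ∀ i : Fin n, p i = a ∨ p i = b) :
    (∃ ε > 0, ∀ x ∈ Set.Icc (fun _ : Fin n => a) (fun _ : Fin n => b),
        x ≠ p → dist x p < ε → f p < f x)
      ↔ ∀ i : Fin n, f p < f (Function.update p i (if p i = a then b else a)) := by
  constructor
  · intro hloc
    obtain ⟨ε, hε, H⟩ := hloc
    intro i
    obtain ⟨c, d, hcd⟩ := hf i p
    have hfp : f p = c * p i + d := by
      have := hcd (p i)
      rwa [Function.update_eq_self] at this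
    set η := min (ε / 2) (b - a) with hη
    have hη0 : 0 < η := lt_min (by linarith) (by linarith)
    have hηba : η ≤ b - a := min_le_right _ _
    have hdist : ∀ t : ℝ, |t - p i| ≤ η → dist (Function.update p i t) p < ε := by
      intro t ht
      rw [dist_pi_lt_iff hε]
      intro j
      rcases eq_or_ne j i with rfl | hj
      · simp only [Function.update_self, Real.dist_eq]
        calc |t - p j| ≤ η := ht
          _ ≤ ε / 2 := min_le_left _ _
          _ < ε := by linarith
      · simp [Function.update_of_ne hj, hε]
    have hmem : ∀ t : ℝ, a ≤ t → t ≤ b →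
        Function.update p i t ∈ Set.Icc (fun _ : Fin n => a) (fun _ : Fin n => b) := by
      intro t h1 h2
      constructor <;> intro j
      · rcases eq_or_ne j i with rfl | hj
        · simpa using h1
        · rw [Function.update_of_ne hj]
          rcases hp j with h3 | h3 <;> simp [h3] <;> linarith
      · rcases eq_or_ne j i with rfl | hj
        · simpa using h2
        · rw [Function.update_of_ne hj]
          rcases hp j with h3 | h3 <;> simp [h3] <;> linarith
    rcases hp i with hpi | hpi
    · rw [if_pos hpi]
      have hne : Function.update p i (a + η) ≠ p := by
        intro hcontra
        have := congrFun hcontra i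
        simp [hpi] at this
        linarith
      have := H _ (hmem (a + η) (by linarith) (by linarith))
        hne (hdist (a + η) (by rw [hpi]; simp [abs_of_nonneg hη0.le]))
      rw [hcd, hfp, hpi] at this
      have hc : 0 < c := by nlinarith
      rw [hcd, hfp, hpi]
      nlinarith
    · rw [if_neg (by rw [hpi]; exact hab.ne')]
      have hne : Function.update p i (b - η) ≠ p := by
        intro hcontra
        have := congrFun hcontra i
        simp [hpi] at this
        linarith
      have := H _ (hmem (b - η) (by linarith) (by linarith))
        hne (hdist (b - η) (by
          rw [hpi]
          have he : b - η - b = -η := by ring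
          rw [he, abs_neg, abs_of_nonneg hη0.le]))
      rw [hcd, hfp, hpi] at this
      have hc : c < 0 := by nlinarith
      rw [hcd, hfp, hpi]
      nlinarith
  · intro h
    rcases Nat.eq_zero_or_pos n with hn | hn
    · refine ⟨1, one_pos, fun x _ hx _ => absurd ?_ hx⟩
      subst hn
      exact Subsingleton.elim x p
    set q : Fin n → ℝ := fun i => if p i = a then b else a with hq
    have hqp : ∀ i, q i - p i ≠ 0 := by
      intro i
      rcases hp i with hpi | hpi <;> simp [hq, hpi, hab.ne', hab.ne] <;> intro hc <;> linarith
    set v : Finset (Fin n) → (Fin n → ℝ) := fun S j => if j ∈ S then q j else p j with hv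
    have hv0 : v ∅ = p := by funext j; simp [hv]
    have hvi : ∀ i : Fin n, v {i} = Function.update p i (q i) := by
      intro i; funext j
      rcases eq_or_ne j i with rfl | hj
      · simp [hv]
      · simp [hv, hj, Function.update_of_ne hj]
    have hune : (Finset.univ : Finset (Fin n)).Nonempty := ⟨⟨0, hn⟩, Finset.mem_univ _⟩
    set m := Finset.univ.inf' hune (fun i : Fin n => f (v {i}) - f p) with hm
    have hm0 : 0 < m := by
      rw [hm, Finset.lt_inf'_iff]
      intro i _
      rw [hvi i]
      have := h i
      simp only [hq]
      linarith [h i]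
    set M := ∑ S ∈ (Finset.univ : Finset (Fin n)).powerset, |f (v S) - f p| with hM
    have hM0 : 0 ≤ M := Finset.sum_nonneg fun _ _ => abs_nonneg _
    set δ := min (1 / (2 * (n : ℝ) + 2)) (m / (2 * (M + 1))) with hδ
    have hn0 : (0:ℝ) ≤ n := Nat.cast_nonneg n
    have h2n : (0:ℝ) < 2 * n + 2 := by linarith
    have hδ0 : 0 < δ := lt_min (by positivity) (by positivity)
    have hδ1 : δ ≤ 1 / (2 * n + 2) := min_le_left _ _
    have hδ2 : δ ≤ m / (2 * (M + 1)) := min_le_right _ _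
    have hδhalf : δ ≤ 1 / 2 := by
      have : 1 / (2 * (n:ℝ) + 2) ≤ 1 / 2 := by
        apply one_div_le_one_div_of_le <;> linarith
      linarith
    refine ⟨δ * (b - a), mul_pos hδ0 (by linarith), fun x hxI hxp hxd => ?_⟩
    set s : Fin n → ℝ := fun i => (x i - p i) / (q i - p i) with hs
    have hxa : ∀ i, a ≤ x i := fun i => hxI.1 i
    have hxb : ∀ i, x i ≤ b := fun i => hxI.2 i
    have hs0 : ∀ i, 0 ≤ s i := by
      intro i
      rcases hp i with hpi | hpi
      · have hqi : q i = b := by simp [hq, hpi]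
        simp only [hs, hpi, hqi]
        exact div_nonneg (by linarith [hxa i]) (by linarith)
      · have hqi : q i = a := by simp [hq, hpi, hab.ne']
        simp only [hs, hpi, hqi]
        have heq : (x i - b) / (a - b) = (b - x i) / (b - a) := by
          rw [div_eq_div_iff (by linarith) (by linarith)]; ring
        rw [heq]
        exact div_nonneg (by linarith [hxb i]) (by linarith)
    have hdpi : ∀ i, |x i - p i| < δ * (b - a) := by
      intro i
      calc |x i - p i| = dist (x i) (p i) := (Real.dist_eq _ _).symm
        _ ≤ dist x p := dist_le_pi_dist x p i
        _ < δ * (b - a) := hxd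
    have hsδ : ∀ i, s i ≤ δ := by
      intro i
      rcases hp i with hpi | hpi
      · have hqi : q i = b := by simp [hq, hpi]
        simp only [hs, hpi, hqi]
        rw [div_le_iff₀ (by linarith)]
        have h1 := le_abs_self (x i - p i)
        have h2 := hdpi i
        rw [hpi] at h1 h2
        linarith
      · have hqi : q i = a := by simp [hq, hpi, hab.ne']
        simp only [hs, hpi, hqi]
        have heq : (x i - b) / (a - b) = (b - x i) / (b - a) := by
          rw [div_eq_div_iff (by linarith) (by linarith)]; ring
        rw [heq, div_le_iff₀ (by linarith)]
        have h1 : b - x i ≤ |x i - b| := by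
          rw [abs_sub_comm]; exact le_abs_self _
        have h2 := hdpi i
        rw [hpi] at h2
        linarith
    have hs1 : ∀ i, s i ≤ 1 := fun i => by linarith [hsδ i, hδhalf]
    have hxeq : ∀ i, x i = (1 - s i) * p i + s i * q i := by
      intro i
      have h1 : s i * (q i - p i) = x i - p i := by
        simp only [hs]
        exact div_mul_cancel₀ _ (hqp i)
      nlinarith [h1]
    have hinterp := multilinear_interp f hf p q x s hxeq Finset.univ
    simp only [Finset.mem_univ, if_true] at hinterp
    have hsum1 : ∑ S ∈ (Finset.univ : Finset (Fin n)).powerset,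
        ((∏ i ∈ S, s i) * ∏ i ∈ Finset.univ \ S, (1 - s i)) = 1 := by
      rw [← Finset.prod_add]
      simp
    have key : f x - f p = ∑ S ∈ (Finset.univ : Finset (Fin n)).powerset,
        ((∏ i ∈ S, s i) * ∏ i ∈ Finset.univ \ S, (1 - s i)) * (f (v S) - f p) := by
      simp only [mul_sub]
      rw [Finset.sum_sub_distrib, ← Finset.sum_mul, hsum1, one_mul, ← hinterp]
    set t := ∑ i : Fin n, s i with ht
    have ht0 : 0 < t := by
      obtain ⟨i, hi⟩ := Function.ne_iff.mp hxp
      have hsi : s i ≠ 0 := by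
        rw [hs]
        exact div_ne_zero (sub_ne_zero.mpr hi) (hqp i)
      exact Finset.sum_pos' (fun j _ => hs0 j)
        ⟨i, Finset.mem_univ i, lt_of_le_of_ne (hs0 i) (Ne.symm hsi)⟩
    have hst : ∀ i, s i ≤ t := fun i =>
      Finset.single_le_sum (fun j _ => hs0 j) (Finset.mem_univ i)
    -- product of (1 - s j) over any set is at least 1/2
    have hprod : ∀ A : Finset (Fin n), (1:ℝ)/2 ≤ ∏ j ∈ A, (1 - s j) := by
      intro A
      have hcard : A.card ≤ n := by simpa using Finset.card_le_univ A
      have h1 : ((1:ℝ) - δ) ^ A.card ≤ ∏ j ∈ A, (1 - s j) := by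
        rw [← Finset.prod_const]
        exact Finset.prod_le_prod (fun j _ => by linarith) (fun j _ => by linarith [hsδ j])
      have h2 : ((1:ℝ) - δ) ^ n ≤ (1 - δ) ^ A.card :=
        pow_le_pow_of_le_one (by linarith) (by linarith) hcard
      have h3 : 1 - (n:ℝ) * δ ≤ (1 - δ) ^ n := by
        have := one_add_mul_le_pow (a := -δ) (by linarith) n
        have he : (1 + -δ) = 1 - δ := by ring
        rw [he] at this
        linarith
      have h4 : (n:ℝ) * δ ≤ 1/2 := by
        have h5 : (n:ℝ) * δ ≤ n * (1 / (2*n+2)) := mul_le_mul_of_nonneg_left hδ1 hn0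
        have h6 : (n:ℝ) * (1 / (2*n+2)) ≤ 1/2 := by
          rw [mul_one_div, div_le_div_iff₀ h2n two_pos]
          linarith
        linarith
      linarith
    -- split the sum into singletons and the rest
    have hsplit := Finset.sum_filter_add_sum_filter_not
      (Finset.univ : Finset (Fin n)).powerset (fun S => S.card = 1)
      (fun S => ((∏ i ∈ S, s i) * ∏ i ∈ Finset.univ \ S, (1 - s i)) * (f (v S) - f p))
    rw [← hsplit] at key
    -- singleton part
    have himg : (Finset.univ : Finset (Fin n)).powerset.filter (fun S => S.card = 1)
        = Finset.univ.image (fun i : Fin n => ({i} : Finset (Fin n))) := by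
      ext S
      simp only [Finset.mem_filter, Finset.mem_powerset, Finset.mem_image, Finset.mem_univ,
        true_and, Finset.card_eq_one, Finset.subset_univ]
      constructor
      · rintro ⟨i, rfl⟩; exact ⟨i, rfl⟩
      · rintro ⟨i, rfl⟩; exact ⟨i, rfl⟩
    have hA : m / 2 * t ≤ ∑ S ∈ (Finset.univ : Finset (Fin n)).powerset.filter (fun S => S.card = 1),
        ((∏ i ∈ S, s i) * ∏ i ∈ Finset.univ \ S, (1 - s i)) * (f (v S) - f p) := by
      rw [himg, Finset.sum_image (fun i _ j _ hij => Finset.singleton_injective hij)]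
      have hterm : ∀ i : Fin n, m / 2 * s i ≤
          ((∏ j ∈ ({i} : Finset (Fin n)), s j) * ∏ j ∈ Finset.univ \ {i}, (1 - s j))
            * (f (v {i}) - f p) := by
        intro i
        rw [Finset.prod_singleton]
        have hd : m ≤ f (v {i}) - f p := by
          exact Finset.inf'_le (fun i : Fin n => f (v {i}) - f p) (Finset.mem_univ i)
        have hP := hprod (Finset.univ \ {i})
        have k1 : m / 2 ≤ (∏ j ∈ Finset.univ \ {i}, (1 - s j)) * (f (v {i}) - f p) := by
          have := mul_le_mul hP hd hm0.le (by linarith)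
          linarith
        have k2 := mul_le_mul_of_nonneg_left k1 (hs0 i)
        rw [mul_assoc, mul_comm (m / 2) (s i)]
        exact k2
      calc m / 2 * t = ∑ i : Fin n, m / 2 * s i := by rw [ht, Finset.mul_sum]
        _ ≤ _ := Finset.sum_le_sum (fun i _ => hterm i)
    -- non-singleton part
    have hB : -(δ * t * M) ≤ ∑ S ∈ (Finset.univ : Finset (Fin n)).powerset.filter
        (fun S => ¬ S.card = 1),
        ((∏ i ∈ S, s i) * ∏ i ∈ Finset.univ \ S, (1 - s i)) * (f (v S) - f p) := by
      have hterm : ∀ S ∈ (Finset.univ : Finset (Fin n)).powerset.filter (fun S => ¬ S.card = 1),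
          -(δ * t * |f (v S) - f p|) ≤
          ((∏ i ∈ S, s i) * ∏ i ∈ Finset.univ \ S, (1 - s i)) * (f (v S) - f p) := by
        intro S hS
        have hc1 : ¬ S.card = 1 := (Finset.mem_filter.mp hS).2
        rcases Finset.eq_empty_or_nonempty S with rfl | hSne
        · rw [hv0]
          simp
        · have hc2 : 2 ≤ S.card := by
            have := Finset.card_pos.mpr hSne
            omega
          obtain ⟨i1, hi1⟩ := hSne
          have hc3 : (S.erase i1).Nonempty := by
            rw [← Finset.card_pos, Finset.card_erase_of_mem hi1]
            omega
          obtain ⟨i2, hi2⟩ := hc3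
          have e1 : ∏ j ∈ S, s j = s i1 * ∏ j ∈ S.erase i1, s j :=
            (Finset.mul_prod_erase S s hi1).symm
          have e2 : ∏ j ∈ S.erase i1, s j = s i2 * ∏ j ∈ (S.erase i1).erase i2, s j :=
            (Finset.mul_prod_erase _ s hi2).symm
          have e3 : ∏ j ∈ (S.erase i1).erase i2, s j ≤ 1 :=
            Finset.prod_le_one (fun j _ => hs0 j) (fun j _ => hs1 j)
          have e3' : 0 ≤ ∏ j ∈ (S.erase i1).erase i2, s j :=
            Finset.prod_nonneg (fun j _ => hs0 j)
          have e4 : s i2 * ∏ j ∈ (S.erase i1).erase i2, s j ≤ s i2 :=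
            mul_le_of_le_one_right (hs0 i2) e3
          have e5 : s i1 * (s i2 * ∏ j ∈ (S.erase i1).erase i2, s j) ≤ s i1 * s i2 :=
            mul_le_mul_of_nonneg_left e4 (hs0 i1)
          have e5' : s i1 * s i2 ≤ δ * t := mul_le_mul (hsδ i1) (hst i2) (hs0 i2) hδ0.le
          have e6 : ∏ j ∈ S, s j ≤ δ * t := by
            rw [e1, e2]; linarith
          have e7 : 0 ≤ ∏ j ∈ S, s j := Finset.prod_nonneg (fun j _ => hs0 j)
          have hw1 : ∏ j ∈ Finset.univ \ S, (1 - s j) ≤ 1 :=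
            Finset.prod_le_one (fun j _ => by linarith [hs1 j]) (fun j _ => by linarith [hs0 j])
          have hw0 : 0 ≤ ∏ j ∈ Finset.univ \ S, (1 - s j) :=
            Finset.prod_nonneg (fun j _ => by linarith [hsδ j, hδhalf])
          have hwS : (∏ i ∈ S, s i) * ∏ i ∈ Finset.univ \ S, (1 - s i) ≤ δ * t :=
            le_trans (mul_le_of_le_one_right e7 hw1) e6
          have hwS0 : 0 ≤ (∏ i ∈ S, s i) * ∏ i ∈ Finset.univ \ S, (1 - s i) :=
            mul_nonneg e7 hw0
          have h10 := mul_le_mul_of_nonneg_left (neg_abs_le (f (v S) - f p)) hwS0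
          rw [mul_neg] at h10
          have h11 := mul_le_mul_of_nonneg_right hwS (abs_nonneg (f (v S) - f p))
          linarith
      have hsub : ∑ S ∈ (Finset.univ : Finset (Fin n)).powerset.filter (fun S => ¬ S.card = 1),
          |f (v S) - f p| ≤ M :=
        Finset.sum_le_sum_of_subset_of_nonneg (Finset.filter_subset _ _)
          (fun S _ _ => abs_nonneg _)
      have h12 := Finset.sum_le_sum hterm
      have h13 : ∑ S ∈ (Finset.univ : Finset (Fin n)).powerset.filter (fun S => ¬ S.card = 1),
          -(δ * t * |f (v S) - f p|)
          = -(δ * t * ∑ S ∈ (Finset.univ : Finset (Fin n)).powerset.filter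
              (fun S => ¬ S.card = 1), |f (v S) - f p|) := by
        rw [Finset.sum_neg_distrib, ← Finset.mul_sum]
      rw [h13] at h12
      have h14 := mul_le_mul_of_nonneg_left hsub (mul_nonneg hδ0.le ht0.le)
      linarith
    -- conclude
    have hδm : δ * (2 * (M + 1)) ≤ m := (le_div_iff₀ (by linarith)).mp hδ2
    have hfin : δ * M < m / 2 := by
      have hr2 : δ * (2 * (M + 1)) = 2 * (δ * M) + 2 * δ := by ring
      linarith
    have hpos : 0 < (m / 2 - δ * M) * t := mul_pos (by linarith) ht0
    have hring : m / 2 * t - δ * t * M = (m / 2 - δ * M) * t := by ring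
    linarith [key, hA, hB, hpos, hring]
end

section
/- Let E be an Ising energy and let m ≠ k be two non-adjacent spins, i.e., J_mk + J_km = 0. Then the energy change from simultaneously flipping both spins m and k equals the sum of the individual energy changes: Δ_{mk} = Δ_m + Δ_k. Consequently, if flipping m alone and flipping k alone both strictly increase the energy, then flipping both simultaneously also strictly increases the energy. -/
/-!
Flipping the spins of a set `S` changes `W i` into `-W i` for `i ∈ S`, so a product
`W i * W j` changes sign exactly when one of `i, j` lies in `S`. For disjoint `S` and `T`
every linear term and every quadratic term not coupling `S` with `T` changes under the flip
of `S ∪ T` by the sum of its changes under the flips of `S` and of `T`; two non-adjacent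
spins are the case `S = {m}`, `T = {k}`.
-/

open Finset

variable {ι : Type*} [DecidableEq ι]

def flipSpins (S : Finset ι) (Z : ι → ℝ) : ι → ℝ := fun i => if i ∈ S then -Z i else Z i

section Flip

variable {S T : Finset ι}

lemma flipSpins_union_add (hST : Disjoint S T) (Z : ι → ℝ) (i : ι) :
    flipSpins (S ∪ T) Z i + Z i = flipSpins S Z i + flipSpins T Z i := by
  have : i ∈ S → i ∉ T := fun hi => disjoint_left.1 hST hi
  by_cases hS : i ∈ S <;> by_cases hT : i ∈ T <;> simp_all [flipSpins]

lemma flipSpins_union_mul_add (hST : Disjoint S T) (Z : ι → ℝ) {i j : ι}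
    (hij : ¬(i ∈ S ∧ j ∈ T)) (hji : ¬(i ∈ T ∧ j ∈ S)) :
    flipSpins (S ∪ T) Z i * flipSpins (S ∪ T) Z j + Z i * Z j
      = flipSpins S Z i * flipSpins S Z j + flipSpins T Z i * flipSpins T Z j := by
  have hi : i ∈ S → i ∉ T := fun hi => disjoint_left.1 hST hi
  have hj : j ∈ S → j ∉ T := fun hj => disjoint_left.1 hST hj
  by_cases hiS : i ∈ S <;> by_cases hiT : i ∈ T <;> by_cases hjS : j ∈ S <;>
    by_cases hjT : j ∈ T <;> simp_all [flipSpins]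

end Flip

variable [Fintype ι]

def quadraticEnergy (h : ι → ℝ) (K : ι → ι → ℝ) (W : ι → ℝ) : ℝ :=
  ∑ i, h i * W i + ∑ i, ∑ j, K i j * W i * W j

theorem quadraticEnergy_flipSpins_union {S T : Finset ι} (hST : Disjoint S T)
    (h : ι → ℝ) (K : ι → ι → ℝ) (hK : ∀ i ∈ S, ∀ j ∈ T, K i j = 0 ∧ K j i = 0)
    (Z : ι → ℝ) :
    quadraticEnergy h K (flipSpins (S ∪ T) Z) - quadraticEnergy h K Z
      = (quadraticEnergy h K (flipSpins S Z) - quadraticEnergy h K Z)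
        + (quadraticEnergy h K (flipSpins T Z) - quadraticEnergy h K Z) := by
  have hlin : ∀ i, h i * flipSpins (S ∪ T) Z i + h i * Z i
      = h i * flipSpins S Z i + h i * flipSpins T Z i := fun i => by
    rw [← mul_add, ← mul_add, flipSpins_union_add hST]
  have hquad : ∀ i j,
      K i j * flipSpins (S ∪ T) Z i * flipSpins (S ∪ T) Z j + K i j * Z i * Z j
      = K i j * flipSpins S Z i * flipSpins S Z j + K i j * flipSpins T Z i * flipSpins T Z j := by
    intro i j
    by_cases hcoupled : (i ∈ S ∧ j ∈ T) ∨ (i ∈ T ∧ j ∈ S)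
    · have hKij : K i j = 0 := by
        rcases hcoupled with ⟨hi, hj⟩ | ⟨hi, hj⟩
        exacts [(hK i hi j hj).1, (hK j hj i hi).2]
      simp [hKij]
    · push Not at hcoupled
      simp only [mul_assoc, ← mul_add]
      rw [flipSpins_union_mul_add hST Z (not_and.2 hcoupled.1) (not_and.2 hcoupled.2)]
  have hlin_sum : ∑ i, h i * flipSpins (S ∪ T) Z i + ∑ i, h i * Z i
      = ∑ i, h i * flipSpins S Z i + ∑ i, h i * flipSpins T Z i := by
    simp only [← sum_add_distrib, hlin]
  have hquad_sum :
      ∑ i, ∑ j, K i j * flipSpins (S ∪ T) Z i * flipSpins (S ∪ T) Z j + ∑ i, ∑ j, K i j * Z i * Z j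
        = ∑ i, ∑ j, K i j * flipSpins S Z i * flipSpins S Z j
          + ∑ i, ∑ j, K i j * flipSpins T Z i * flipSpins T Z j := by
    simp only [← sum_add_distrib, hquad]
  simp only [quadraticEnergy]
  linarith

theorem ising_two_nonadjacent_flips_general (n : ℕ) (h : Fin n → ℝ) (J : Fin n → Fin n → ℝ)
    (hJ : ∀ i j : Fin n, ¬ i < j → J i j = 0)
    (Z : Fin n → ℝ)
    (m k : Fin n) (hmk : m ≠ k) (hadj : J m k + J k m = 0) :
    let E : (Fin n → ℝ) → ℝ := fun W =>
      ∑ i, h i * W i + ∑ i, ∑ j, if i < j then J i j * W i * W j else 0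
    let Δ : Finset (Fin n) → ℝ := fun S =>
      E (fun i => if i ∈ S then -(Z i) else Z i) - E Z
    Δ {m, k} = Δ {m} + Δ {k}
      ∧ (0 < Δ {m} → 0 < Δ {k} → 0 < Δ {m, k}) := by
  intro E Δ
  set K : Fin n → Fin n → ℝ := fun i j => if i < j then J i j else 0
  have hE : E = quadraticEnergy h K := by
    funext W
    simp only [E, quadraticEnergy, K, ite_mul, zero_mul]
  have hΔ : ∀ S, Δ S = quadraticEnergy h K (flipSpins S Z) - quadraticEnergy h K Z := by
    intro S
    simp only [Δ, hE]
    rfl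
  -- `hJ` kills one of the two couplings, and then `hadj` kills the other.
  have hJmk : J m k = 0 ∧ J k m = 0 := by
    rcases hmk.lt_or_gt with hlt | hlt
    · have := hJ k m hlt.not_gt
      constructor <;> linarith
    · have := hJ m k hlt.not_gt
      constructor <;> linarith
  have hK : ∀ i ∈ ({m} : Finset (Fin n)), ∀ j ∈ ({k} : Finset (Fin n)),
      K i j = 0 ∧ K j i = 0 := by
    simp [K, hJmk]
  have hadd : Δ {m, k} = Δ {m} + Δ {k} := by
    simp only [hΔ, ← quadraticEnergy_flipSpins_union (disjoint_singleton.2 hmk) h K hK Z]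
    rfl
  exact ⟨hadd, fun hm hk => hadd ▸ add_pos hm hk⟩

/-- For non-adjacent spins `m ≠ k` (i.e. `J m k + J k m = 0`), the energy change of
flipping both spins equals the sum of the individual energy changes; consequently, if
both single flips strictly increase the energy then so does the double flip. -/
theorem ising_two_nonadjacent_flips (n : ℕ) (h : Fin n → ℝ) (J : Fin n → Fin n → ℝ)
    (hJ : ∀ i j : Fin n, ¬ i < j → J i j = 0)
    (Z : Fin n → ℝ) (hZ : ∀ i, Z i = -1 ∨ Z i = 1)
    (m k : Fin n) (hmk : m ≠ k) (hadj : J m k + J k m = 0) :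
    let E : (Fin n → ℝ) → ℝ := fun W =>
      ∑ i, h i * W i + ∑ i, ∑ j, if i < j then J i j * W i * W j else 0
    let Δ : Finset (Fin n) → ℝ := fun S =>
      E (fun i => if i ∈ S then -(Z i) else Z i) - E Z
    Δ {m, k} = Δ {m} + Δ {k}
      ∧ (0 < Δ {m} → 0 < Δ {k} → 0 < Δ {m, k}) :=
  ising_two_nonadjacent_flips_general n h J hJ Z m k hmk hadj
end
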